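/- For every x ∈ V and every integer n ≥ 1, the open d-ball of radius 1/n centered at x equals the class B n x, that is, {y ∈ V | d(x,y) < 1/n} = B n x; consequently the topology on V induced by the metric d equals τ. (Abstract form of Theorem 5.5, part (3), of the paper.) -/

import Mathlib

/-- `x` and `y` are related: equal, `E 0`-equivalent, or joined by an elementary move. -/
def Related {V : Type*} (E : ℕ → V → V → Prop) (A : V → V → Prop) (x y : V) : Prop :=
  x = y ∨ E 0 x y ∨ A x y

open Classical in
/-- The partial distance `d̂` (given a total value on unrelated pairs, which is
never used): `d̂(x,y) = 0` if `x = y`; if `x ≠ y` and `E 0 x y`, then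
`d̂(x,y) = 1/n` where `n` is the least (equivalently, for a separating refining
family, the unique) integer with `¬ E n x y` — so `E (n-1) x y` and `¬ E n x y`;
and `d̂(x,y) = 1` if `¬ E 0 x y`. -/
noncomputable def dhat {V : Type*} (E : ℕ → V → V → Prop) (x y : V) : ℝ :=
  if x = y then 0
  else if E 0 x y then ((sInf {n : ℕ | ¬ E n x y} : ℕ) : ℝ)⁻¹
  else 1

/-- `c` is a chain of length-parameter `ℓ` from `x` to `y`: consecutive terms are related. -/
def IsChain' {V : Type*} (E : ℕ → V → V → Prop) (A : V → V → Prop)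
    (x y : V) (ℓ : ℕ) (c : ℕ → V) : Prop :=
  c 0 = x ∧ c ℓ = y ∧ ∀ i < ℓ, Related E A (c i) (c (i + 1))

/-- The length of a chain: the sum of `d̂` over consecutive pairs. -/
noncomputable def chainLength {V : Type*} (E : ℕ → V → V → Prop)
    (ℓ : ℕ) (c : ℕ → V) : ℝ :=
  ∑ i ∈ Finset.range ℓ, dhat E (c i) (c (i + 1))

/-- The distance `d(x,y)`: the infimum of the lengths of all chains from `x` to `y`. -/
noncomputable def pdist {V : Type*} (E : ℕ → V → V → Prop) (A : V → V → Prop)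
    (x y : V) : ℝ :=
  sInf {L : ℝ | ∃ ℓ c, IsChain' E A x y ℓ c ∧ L = chainLength E ℓ c}

/-!
A chain of length `< 1/n` consists of steps of `d̂ < 1/n`, i.e. of `E n`-steps, so its endpoints
are `E n`-equivalent; conversely a single `E n`-step is a chain of length `d̂ < 1/n`. Hence
metric balls of radius `1/n` are exactly the classes of `E n`. Since `d(x, ·) < ε` is witnessed
by a chain of length `< ε`, appending one short `E n`-step keeps it below `ε`, so every ball is
a union of classes, and each class is a union of smaller balls.
-/

theorem TopologicalSpace.generateFrom_le_generateFrom_of_forall_exists_subset {α : Type*}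
    {𝒮 𝒯 : Set (Set α)} (h : ∀ s ∈ 𝒮, ∀ x ∈ s, ∃ t ∈ 𝒯, x ∈ t ∧ t ⊆ s) :
    generateFrom 𝒯 ≤ generateFrom 𝒮 := by
  let := generateFrom 𝒯
  refine le_generateFrom fun s hs => isOpen_iff_forall_mem_open.2 fun x hx => ?_
  obtain ⟨t, ht, hxt, hts⟩ := h s hs x hx
  exact ⟨t, hts, isOpen_generateFrom_of_mem ht, hxt⟩

section Chains

variable {V : Type*} {E : ℕ → V → V → Prop} {A : V → V → Prop}

theorem dhat_nonneg (x y : V) : 0 ≤ dhat E x y := by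
  unfold dhat
  split_ifs <;> positivity

theorem dhat_lt_one_div_iff (hEquiv : ∀ n, Equivalence (E n))
    (hRefine : ∀ n x y, E (n + 1) x y → E n x y) {n : ℕ} (hn : 1 ≤ n) {x y : V} :
    dhat E x y < 1 / n ↔ E n x y := by
  classical
  have hE_anti : Antitone E := antitone_nat_of_succ_le hRefine
  have hn' : (0 : ℝ) < n := by exact_mod_cast hn
  unfold dhat
  split_ifs with hxy h0
  · simpa [hxy, hn'] using (hEquiv n).refl y
  · by_cases hsep : {k | ¬ E k x y}.Nonempty
    · have hmem := Nat.sInf_mem hsep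
      have hpos : 0 < sInf {k | ¬ E k x y} := Nat.pos_of_ne_zero fun h => (h ▸ hmem) h0
      rw [one_div, inv_lt_inv₀ (by exact_mod_cast hpos) hn', Nat.cast_lt]
      refine ⟨fun h => not_not.1 (Nat.notMem_of_lt_sInf h), fun h => ?_⟩
      by_contra! hle
      exact hmem (hE_anti hle x y h)
    · rw [Set.not_nonempty_iff_eq_empty.1 hsep, Nat.sInf_empty]
      have hall : ∀ k, E k x y := by simpa [Set.Nonempty] using hsep
      simp [hn', hall n]
  · have : ¬ E n x y := fun h => h0 (hE_anti (Nat.zero_le n) x y h)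
    simp only [this, iff_false, not_lt]
    rw [one_div]
    exact inv_le_one_of_one_le₀ (by exact_mod_cast hn)

theorem Related.of_rel (hRefine : ∀ n x y, E (n + 1) x y → E n x y) {n : ℕ} {x y : V}
    (h : E n x y) : Related E A x y :=
  Or.inr (Or.inl (antitone_nat_of_succ_le (f := E) hRefine n.zero_le x y h))

theorem chainLength_nonneg (ℓ : ℕ) (c : ℕ → V) : 0 ≤ chainLength E ℓ c :=
  Finset.sum_nonneg fun _ _ => dhat_nonneg _ _

theorem dhat_le_chainLength {ℓ i : ℕ} (c : ℕ → V) (hi : i < ℓ) :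
    dhat E (c i) (c (i + 1)) ≤ chainLength E ℓ c :=
  Finset.single_le_sum (f := fun j => dhat E (c j) (c (j + 1))) (fun _ _ => dhat_nonneg _ _)
    (Finset.mem_range.2 hi)

theorem IsChain'.nil (x : V) : IsChain' E A x x 0 fun _ => x :=
  ⟨rfl, rfl, fun _ h => absurd h (Nat.not_lt_zero _)⟩

theorem IsChain'.cons {x z y : V} {ℓ : ℕ} {c : ℕ → V} (h : Related E A x z)
    (hc : IsChain' E A z y ℓ c) :
    IsChain' E A x y (ℓ + 1) fun i => if i = 0 then x else c (i - 1) := by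
  refine ⟨rfl, by simpa using hc.2.1, fun i hi => ?_⟩
  rcases i with _ | i
  · simpa [hc.1] using h
  · simpa using hc.2.2 i (by omega)

theorem IsChain'.snoc {x z y : V} {ℓ : ℕ} {c : ℕ → V} (hc : IsChain' E A x z ℓ c)
    (h : Related E A z y) : IsChain' E A x y (ℓ + 1) (Function.update c (ℓ + 1) y) := by
  refine ⟨by simpa using hc.1, by simp, fun i hi => ?_⟩
  rcases Nat.lt_succ_iff_lt_or_eq.1 hi with hi | rfl
  · simpa [Function.update_of_ne (show i ≠ ℓ + 1 by omega),
      Function.update_of_ne (show i + 1 ≠ ℓ + 1 by omega)] using hc.2.2 i hi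
  · simpa [hc.2.1] using h

theorem chainLength_snoc {ℓ : ℕ} (c : ℕ → V) (y : V) :
    chainLength E (ℓ + 1) (Function.update c (ℓ + 1) y) = chainLength E ℓ c + dhat E (c ℓ) y := by
  unfold chainLength
  rw [Finset.sum_range_succ, Function.update_self, Function.update_of_ne (by omega)]
  congr 1
  refine Finset.sum_congr rfl fun i hi => ?_
  have hi := Finset.mem_range.1 hi
  rw [Function.update_of_ne (by omega), Function.update_of_ne (by omega)]

theorem IsChain'.rel_of_chainLength_lt (hEquiv : ∀ n, Equivalence (E n))
    (hRefine : ∀ n x y, E (n + 1) x y → E n x y) {n : ℕ} (hn : 1 ≤ n) {x y : V} {ℓ : ℕ}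
    {c : ℕ → V} (hc : IsChain' E A x y ℓ c) (hlen : chainLength E ℓ c < 1 / n) : E n x y := by
  have hstep : ∀ i < ℓ, E n (c i) (c (i + 1)) := fun i hi =>
    (dhat_lt_one_div_iff hEquiv hRefine hn).1 ((dhat_le_chainLength c hi).trans_lt hlen)
  have hprefix : ∀ i ≤ ℓ, E n x (c i) := by
    intro i hi
    induction i with
    | zero => exact hc.1 ▸ (hEquiv n).refl x
    | succ k ih => exact (hEquiv n).trans (ih (by omega)) (hstep k hi)
  exact hc.2.1 ▸ hprefix ℓ le_rfl

theorem pdist_le_chainLength {x y : V} {ℓ : ℕ} {c : ℕ → V} (hc : IsChain' E A x y ℓ c) :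
    pdist E A x y ≤ chainLength E ℓ c :=
  csInf_le ⟨0, by rintro _ ⟨ℓ, c, -, rfl⟩; exact chainLength_nonneg ℓ c⟩ ⟨ℓ, c, hc, rfl⟩

theorem exists_chainLength_lt_of_pdist_lt
    (hChain : ∀ x y : V, ∃ z : V, E 0 x z ∧ ∃ ℓ c, IsChain' E A z y ℓ c) {x y : V} {r : ℝ}
    (h : pdist E A x y < r) : ∃ ℓ c, IsChain' E A x y ℓ c ∧ chainLength E ℓ c < r := by
  obtain ⟨z, hxz, ℓ, c, hc⟩ := hChain x y
  -- the set of chain lengths is nonempty, so its `sInf` is not the junk value `0` of `sInf ∅`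
  obtain ⟨_, ⟨ℓ, c, hc, rfl⟩, hlt⟩ :=
    exists_lt_of_csInf_lt (s := {L | ∃ ℓ c, IsChain' E A x y ℓ c ∧ L = chainLength E ℓ c})
      ⟨_, ℓ + 1, _, hc.cons (Or.inr (Or.inl hxz)), rfl⟩ h
  exact ⟨ℓ, c, hc, hlt⟩

theorem pdist_lt_one_div_iff (hEquiv : ∀ n, Equivalence (E n))
    (hRefine : ∀ n x y, E (n + 1) x y → E n x y)
    (hChain : ∀ x y : V, ∃ z : V, E 0 x z ∧ ∃ ℓ c, IsChain' E A z y ℓ c)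
    {n : ℕ} (hn : 1 ≤ n) {x y : V} : pdist E A x y < 1 / n ↔ E n x y := by
  constructor
  · intro h
    obtain ⟨ℓ, c, hc, hlt⟩ := exists_chainLength_lt_of_pdist_lt hChain h
    exact hc.rel_of_chainLength_lt hEquiv hRefine hn hlt
  · intro h
    calc pdist E A x y ≤ chainLength E 1 (Function.update (fun _ => x) 1 y) :=
          pdist_le_chainLength ((IsChain'.nil x).snoc (.of_rel hRefine h))
      _ = dhat E x y := by simp [chainLength]
      _ < 1 / n := (dhat_lt_one_div_iff hEquiv hRefine hn).2 h

theorem exists_class_subset_ball (hEquiv : ∀ n, Equivalence (E n))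
    (hRefine : ∀ n x y, E (n + 1) x y → E n x y)
    (hChain : ∀ x y : V, ∃ z : V, E 0 x z ∧ ∃ ℓ c, IsChain' E A z y ℓ c)
    {x z : V} {ε : ℝ} (hz : pdist E A x z < ε) :
    ∃ n, {y | E n z y} ⊆ {y | pdist E A x y < ε} := by
  obtain ⟨ℓ, c, hc, hlt⟩ := exists_chainLength_lt_of_pdist_lt hChain hz
  obtain ⟨n, hn⟩ := exists_nat_one_div_lt (sub_pos.2 hlt)
  refine ⟨n + 1, fun y hy => ?_⟩
  have hdhat : dhat E z y < 1 / (n + 1 : ℕ) :=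
    (dhat_lt_one_div_iff hEquiv hRefine (by omega)).2 hy
  calc pdist E A x y ≤ chainLength E ℓ c + dhat E (c ℓ) y := by
        rw [← chainLength_snoc]; exact pdist_le_chainLength (hc.snoc (.of_rel hRefine hy))
    _ < ε := by rw [hc.2.1]; push_cast at hdhat; linarith

end Chains

theorem pdist_ball_eq_class_and_topology_general (V : Type*) (E : ℕ → V → V → Prop)
    (A : V → V → Prop)
    (hEquiv : ∀ n, Equivalence (E n))
    (hRefine : ∀ n x y, E (n + 1) x y → E n x y)
    (hChain : ∀ x y : V, ∃ z : V, E 0 x z ∧ ∃ ℓ c, IsChain' E A z y ℓ c) :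
    (∀ (x : V) (n : ℕ), 1 ≤ n →
      {y : V | pdist E A x y < 1 / (n : ℝ)} = {y : V | E n x y}) ∧
    TopologicalSpace.generateFrom
        {s : Set V | ∃ (x : V) (ε : ℝ), 0 < ε ∧ s = {y : V | pdist E A x y < ε}} =
      TopologicalSpace.generateFrom {s : Set V | ∃ n x, s = {y | E n x y}} := by
  have hball : ∀ (x : V) (n : ℕ), 1 ≤ n →
      {y : V | pdist E A x y < 1 / (n : ℝ)} = {y : V | E n x y} := fun x n hn =>
    Set.ext fun y => pdist_lt_one_div_iff hEquiv hRefine hChain hn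
  refine ⟨hball, le_antisymm ?_ ?_⟩
  · refine TopologicalSpace.generateFrom_le_generateFrom_of_forall_exists_subset ?_
    rintro _ ⟨n, x, rfl⟩ z hz
    exact ⟨_, ⟨z, _, by positivity, (hball z (n + 1) (by omega)).symm⟩,
      (hEquiv (n + 1)).refl z, fun y hy => (hEquiv n).trans hz (hRefine n z y hy)⟩
  · refine TopologicalSpace.generateFrom_le_generateFrom_of_forall_exists_subset ?_
    rintro _ ⟨x, ε, -, rfl⟩ z hz
    obtain ⟨n, hn⟩ := exists_class_subset_ball hEquiv hRefine hChain hz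
    exact ⟨_, ⟨n, z, rfl⟩, (hEquiv n).refl z, hn⟩

/-- Abstract form of Theorem 5.5, part (3): for every `x ∈ V` and every integer
`n ≥ 1`, the open `d`-ball of radius `1/n` about `x` equals the class `B n x`;
consequently the topology induced by the metric `d` (generated by its open
balls) equals the topology `τ` generated by the classes. -/
theorem pdist_ball_eq_class_and_topology (V : Type*) (E : ℕ → V → V → Prop)
    (A : V → V → Prop)
    (hEquiv : ∀ n, Equivalence (E n))
    (hRefine : ∀ n x y, E (n + 1) x y → E n x y)
    (hSep : ∀ x y : V, x ≠ y → ∃ n : ℕ, ¬ E n x y)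
    (hAsymm : ∀ x y : V, A x y → A y x)
    (hAirrefl : ∀ x : V, ¬ A x x)
    (hChain : ∀ x y : V, ∃ z : V, E 0 x z ∧ ∃ ℓ c, IsChain' E A z y ℓ c) :
    (∀ (x : V) (n : ℕ), 1 ≤ n →
      {y : V | pdist E A x y < 1 / (n : ℝ)} = {y : V | E n x y}) ∧
    TopologicalSpace.generateFrom
        {s : Set V | ∃ (x : V) (ε : ℝ), 0 < ε ∧ s = {y : V | pdist E A x y < ε}} =
      TopologicalSpace.generateFrom {s : Set V | ∃ n x, s = {y | E n x y}} :=
  pdist_ball_eq_class_and_topology_general V E A hEquiv hRefine hChain
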